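/- arXiv:cs/0202036 — 2 statements merged into one kernel-verified Lean document; each statement's English description precedes it below -/
import Mathlib

section
/- Let G be a simple graph with vertex set {1,…,n} and edge enumeration e_1,…,e_m, and let S(G) = S_1(G) ∪ S_2(G) ∪ S_3(G) be its ternary-XOR encoding over the variables X ∪ Y ∪ Z. If a, b, c are three distinct variables in X ∪ Y ∪ Z such that every assignment satisfying S(G) also satisfies a ⊕ b ⊕ c, then the unordered triple {a,b,c} is one of the triples whose XOR application belongs to S(G). -/
/-- A constraint application over a variable set `V`: a `k`-ary Boolean
constraint `C` applied to variables `vars 0, …, vars (k-1)`. -/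
structure CApp (V : Type) where
  k : ℕ
  C : (Fin k → Bool) → Bool
  vars : Fin k → V

/-- An assignment `I` satisfies a constraint application. -/
def CApp.sat {V : Type} (A : CApp V) (I : V → Bool) : Prop :=
  A.C (fun i => I (A.vars i)) = true

/-- The variable set `X ∪ Y ∪ Z` of the ternary-XOR encoding: `X` has one
variable `x_i` per vertex, `Y` one variable `y_k` per edge, and `Z` consists
of the variables `z_i` and `z'_i` for each vertex. -/
abbrev VXYZ (n m : ℕ) := Fin n ⊕ Fin m ⊕ (Fin n ⊕ Fin n)

/-- The vertex variable `x_i`. -/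
def vx {n m : ℕ} (i : Fin n) : VXYZ n m := Sum.inl i

/-- The edge variable `y_k`. -/
def vy {n m : ℕ} (k : Fin m) : VXYZ n m := Sum.inr (Sum.inl k)

/-- The auxiliary variable `z_i`. -/
def vz {n m : ℕ} (i : Fin n) : VXYZ n m := Sum.inr (Sum.inr (Sum.inl i))

/-- The auxiliary variable `z'_i`. -/
def vz' {n m : ℕ} (i : Fin n) : VXYZ n m := Sum.inr (Sum.inr (Sum.inr i))

/-- The ternary XOR constraint applied to the variables `a`, `b`, `c`. -/
def xorApp {V : Type} (a b c : V) : CApp V :=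
  ⟨3, fun v => Bool.xor (v 0) (Bool.xor (v 1) (v 2)), ![a, b, c]⟩

/-- Three edges form a triangle: they are the three edges spanned by three
distinct vertices. -/
def triangleEdges {n : ℕ} (e1 e2 e3 : Sym2 (Fin n)) : Prop :=
  ∃ a b c : Fin n, a ≠ b ∧ b ≠ c ∧ a ≠ c ∧
    e1 = s(a, b) ∧ e2 = s(b, c) ∧ e3 = s(a, c)

/-- The ternary-XOR encoding `S(G) = S_1(G) ∪ S_2(G) ∪ S_3(G)` of a graph
with edge enumeration `e`. -/
def SXor {n m : ℕ} (e : Fin m → Sym2 (Fin n)) : Set (CApp (VXYZ n m)) :=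
  {A | ∃ i j : Fin n, ∃ k : Fin m, e k = s(i, j) ∧ A = xorApp (vx i) (vx j) (vy k)} ∪
  {A | ∃ i : Fin n, A = xorApp (vx i) (vz i) (vz' i)} ∪
  {A | ∃ i j k : Fin m, triangleEdges (e i) (e j) (e k) ∧
    A = xorApp (vy i) (vy j) (vy k)}

/-!
Every choice of the variables `x` and `z` extends to a solution of `S(G)`, by
`y_k = ¬(x_i ⊕ x_j)` for `e_k = {i, j}` and `z'_i = ¬(x_i ⊕ z_i)`. A forced constraint
`a ⊕ b ⊕ c` holds on this whole family. Evaluating it at `x ≡ z ≡ false`, at `x ≡ false, z ≡ true`,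
and at indicator vectors of single vertices shows that, up to the order of `a, b, c`, the triple is
`{x_i, x_j, y_k}` with `e_k = {i, j}`, or `{x_i, z_i, z'_i}`, or three edge variables whose edges
cover every vertex an even number of times, i.e. the edges of a triangle.
-/

theorem xorApp_sat_iff {V : Type} (a b c : V) (I : V → Bool) :
    (xorApp a b c).sat I ↔ (I a ^^ (I b ^^ I c)) = true := by
  simp [CApp.sat, xorApp]

def edgeXor {α : Type*} (t : α → Bool) : Sym2 α → Bool :=
  Sym2.lift ⟨fun p q => t p ^^ t q, fun _ _ => Bool.xor_comm _ _⟩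

@[simp] theorem edgeXor_mk {α : Type*} (t : α → Bool) (p q : α) :
    edgeXor t s(p, q) = (t p ^^ t q) := rfl

@[simp] theorem edgeXor_const_false {α : Type*} (E : Sym2 α) :
    edgeXor (fun _ => false) E = false := by
  induction E using Sym2.ind with
  | _ => simp

theorem edgeXor_indicator {α : Type*} [DecidableEq α] {E : Sym2 α} (hE : ¬E.IsDiag) (v : α) :
    edgeXor (fun q => decide (q = v)) E = decide (v ∈ E) := by
  induction E using Sym2.ind with
  | _ p q =>
    rw [Sym2.mk_isDiag_iff] at hE
    by_cases hp : p = v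
    · subst hp; simp [hE, Ne.symm hE]
    by_cases hq : q = v
    · subst hq; simp [hE, Ne.symm hE]
    simp [hp, hq, Ne.symm hp, Ne.symm hq]

theorem Sym2.eq_mk_of_forall_xor_mem {α : Type*} [DecidableEq α] {E : Sym2 α} {i j : α}
    (hij : i ≠ j) (h : ∀ v, (decide (i = v) ^^ (decide (j = v) ^^ decide (v ∈ E))) = false) :
    E = s(i, j) :=
  Sym2.ext fun v => by
    have := h v
    rw [Sym2.mem_iff]
    by_cases hi : i = v
    · subst hi; simpa [hij, Ne.symm hij] using this
    by_cases hj : j = v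
    · subst hj; simpa [hij, Ne.symm hij] using this
    simpa [hi, hj, Ne.symm hi, Ne.symm hj] using this

theorem triangleEdges_of_forall_xor_mem {n : ℕ} {E₁ E₂ E₃ : Sym2 (Fin n)}
    (h₁ : ¬E₁.IsDiag) (h₂ : ¬E₂.IsDiag) (h₁₂ : E₁ ≠ E₂) (h₁₃ : E₁ ≠ E₃)
    (h : ∀ v, (decide (v ∈ E₁) ^^ (decide (v ∈ E₂) ^^ decide (v ∈ E₃))) = false) :
    triangleEdges E₁ E₂ E₃ := by
  obtain ⟨b, hb₁, hb₂⟩ : ∃ b, b ∈ E₁ ∧ b ∈ E₂ := by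
    by_contra! hdisj
    induction E₁ using Sym2.ind with
    | _ p q =>
      have hp : p ∈ E₃ := by simpa [hdisj] using h p
      have hq : q ∈ E₃ := by simpa [hdisj] using h q
      exact h₁₃ ((Sym2.mem_and_mem_iff (Sym2.mk_isDiag_iff.not.mp h₁)).mp ⟨hp, hq⟩).symm
  set a := Sym2.Mem.other hb₁
  set c := Sym2.Mem.other hb₂
  have hE₁ : E₁ = s(a, b) := by rw [Sym2.eq_swap]; exact (Sym2.other_spec hb₁).symm
  have hE₂ : E₂ = s(b, c) := (Sym2.other_spec hb₂).symm
  have hab : a ≠ b := fun hab => h₁ (by rw [hE₁, hab]; rfl)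
  have hbc : b ≠ c := fun hbc => h₂ (by rw [hE₂, hbc]; rfl)
  have hac : a ≠ c := fun hac => h₁₂ (by rw [hE₁, hE₂, hac, Sym2.eq_swap])
  refine ⟨a, b, c, hab, hbc, hac, hE₁, hE₂, Sym2.ext fun v => ?_⟩
  have hv := h v
  rw [hE₁, hE₂] at hv
  rw [Sym2.mem_iff]
  by_cases hva : v = a
  · subst hva; simpa [hab, hac] using hv
  by_cases hvb : v = b
  · subst hvb; simpa [hva, hbc] using hv
  by_cases hvc : v = c
  · subst hvc; simpa [hva, hvb] using hv
  simpa [hva, hvb, hvc] using hv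

theorem forall_of_forall_sorted {α β : Type*} [LinearOrder β] (r : α → β)
    {P : α → α → α → Prop} (swap₁₂ : ∀ {a b c}, P a b c → P b a c)
    (swap₂₃ : ∀ {a b c}, P a b c → P a c b)
    (sorted : ∀ {a b c}, r a ≤ r b → r b ≤ r c → P a b c) (a b c : α) : P a b c := by
  rcases le_total (r a) (r b) with hab | hba <;> rcases le_total (r b) (r c) with hbc | hcb
  · exact sorted hab hbc
  · rcases le_total (r a) (r c) with hac | hca
    · exact swap₂₃ (sorted hac hcb)
    · exact swap₂₃ (swap₁₂ (sorted hca hab))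
  · rcases le_total (r a) (r c) with hac | hca
    · exact swap₁₂ (sorted hba hac)
    · exact swap₁₂ (swap₂₃ (sorted hbc hca))
  · exact swap₁₂ (swap₂₃ (swap₁₂ (sorted hcb hba)))

namespace SXor

variable {n m : ℕ}

def solution (e : Fin m → Sym2 (Fin n)) (t u : Fin n → Bool) : VXYZ n m → Bool
  | .inl i => t i
  | .inr (.inl k) => !edgeXor t (e k)
  | .inr (.inr (.inl i)) => u i
  | .inr (.inr (.inr i)) => !(t i ^^ u i)

def Forces (e : Fin m → Sym2 (Fin n)) (a b c : VXYZ n m) : Prop :=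
  ∀ t u, (xorApp a b c).sat (solution e t u)

def IsTriple (e : Fin m → Sym2 (Fin n)) (a b c : VXYZ n m) : Prop :=
  ∃ p q r : VXYZ n m, ({p, q, r} : Set (VXYZ n m)) = {a, b, c} ∧ xorApp p q r ∈ SXor e

def block : VXYZ n m → ℕ
  | .inl _ => 0
  | .inr (.inl _) => 1
  | .inr (.inr (.inl _)) => 2
  | .inr (.inr (.inr _)) => 3

variable {e : Fin m → Sym2 (Fin n)}

theorem solution_sat (t u : Fin n → Bool) : ∀ A ∈ SXor e, A.sat (solution e t u) := by
  rintro A ((⟨i, j, k, hk, rfl⟩ | ⟨i, rfl⟩) | ⟨k₁, k₂, k₃, ⟨p, q, r, -, -, -, h₁, h₂, h₃⟩, rfl⟩) <;>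
    rw [xorApp_sat_iff]
  · simp only [solution, vx, vy, hk, edgeXor_mk]
    cases t i <;> cases t j <;> rfl
  · simp only [solution, vx, vz, vz']
    cases t i <;> cases u i <;> rfl
  · simp only [solution, vy, h₁, h₂, h₃, edgeXor_mk]
    cases t p <;> cases t q <;> cases t r <;> rfl

theorem Forces.swap₁₂ {a b c : VXYZ n m} (h : Forces e a b c) : Forces e b a c := fun t u => by
  simpa only [xorApp_sat_iff, Bool.xor_left_comm] using h t u

theorem Forces.swap₂₃ {a b c : VXYZ n m} (h : Forces e a b c) : Forces e a c b := fun t u => by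
  simpa only [xorApp_sat_iff, Bool.xor_comm (solution e t u c)] using h t u

theorem IsTriple.swap₁₂ {a b c : VXYZ n m} : IsTriple e a b c → IsTriple e b a c
  | ⟨p, q, r, hs, hm⟩ => ⟨p, q, r, hs.trans (Set.insert_comm a b {c}), hm⟩

theorem IsTriple.swap₂₃ {a b c : VXYZ n m} : IsTriple e a b c → IsTriple e a c b
  | ⟨p, q, r, hs, hm⟩ => ⟨p, q, r, hs.trans (congrArg (insert a) (Set.pair_comm b c)), hm⟩

theorem isTriple_of_sorted (hinj : Function.Injective e) (hd : ∀ k, ¬(e k).IsDiag)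
    {a b c : VXYZ n m} (hab : a ≠ b) (hbc : b ≠ c) (hac : a ≠ c)
    (hsort₁ : block a ≤ block b) (hsort₂ : block b ≤ block c) (hF : Forces e a b c) :
    IsTriple e a b c := by
  simp only [Forces, xorApp_sat_iff] at hF
  -- The solutions with `x ≡ false` and `z ≡ false`, resp. `z ≡ true`, leave five block patterns.
  have h₀ := hF (fun _ => false) (fun _ => false)
  have hZ := hF (fun _ => false) (fun _ => true)
  rcases a with i₁ | k₁ | j₁ | l₁ <;> rcases b with i₂ | k₂ | j₂ | l₂ <;>
    rcases c with i₃ | k₃ | j₃ | l₃ <;> simp [block] at hsort₁ hsort₂ <;> simp [solution] at h₀ hZ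
  · refine ⟨_, _, _, rfl, Or.inl (Or.inl ⟨i₁, i₂, k₃, ?_, rfl⟩)⟩
    refine Sym2.eq_mk_of_forall_xor_mem (by simpa using hab) fun v => ?_
    simpa [solution, edgeXor_indicator (hd k₃)] using hF (fun q => decide (q = v)) (fun _ => false)
  · obtain rfl : l₃ = j₂ := by
      simpa [solution] using hF (fun _ => false) (fun q => decide (q = j₂))
    obtain rfl : i₁ = l₃ := by
      simpa [solution] using hF (fun q => decide (q = l₃)) (fun _ => false)
    exact ⟨_, _, _, rfl, Or.inl (Or.inr ⟨i₁, rfl⟩)⟩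
  · refine ⟨_, _, _, rfl, Or.inr ⟨k₁, k₂, k₃, ?_, rfl⟩⟩
    refine triangleEdges_of_forall_xor_mem (hd k₁) (hd k₂) (hinj.ne (by simpa using hab))
      (hinj.ne (by simpa using hac)) fun v => ?_
    simpa [solution, edgeXor_indicator, hd] using hF (fun q => decide (q = v)) (fun _ => false)
  · have hj : j₃ ≠ j₂ := by simpa [eq_comm] using hbc
    simpa [solution, hj] using hF (fun _ => false) (fun q => decide (q = j₂))
  · have hl : l₃ ≠ l₂ := by simpa [eq_comm] using hbc
    simpa [solution, hl] using hF (fun _ => false) (fun q => decide (q = l₂))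

theorem isTriple_of_forces (hinj : Function.Injective e) (hd : ∀ k, ¬(e k).IsDiag)
    {a b c : VXYZ n m} (hab : a ≠ b) (hbc : b ≠ c) (hac : a ≠ c) (hF : Forces e a b c) :
    IsTriple e a b c := by
  refine forall_of_forall_sorted block (P := fun a b c =>
      a ≠ b → b ≠ c → a ≠ c → Forces e a b c → IsTriple e a b c)
    ?_ ?_ (fun h₁ h₂ hab hbc hac hF => isTriple_of_sorted hinj hd hab hbc hac h₁ h₂ hF)
    a b c hab hbc hac hF
  · intro a b c h hba hac hbc hF
    exact (h hba.symm hbc hac hF.swap₁₂).swap₁₂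
  · intro a b c h hac hcb hab hF
    exact (h hab hcb.symm hac hF.swap₂₃).swap₂₃

end SXor

theorem stmt_15_general {n m : ℕ} (G : SimpleGraph (Fin n)) (e : Fin m → Sym2 (Fin n))
    (hinj : Function.Injective e) (hmem : ∀ k : Fin m, e k ∈ G.edgeSet)
    (a b c : VXYZ n m) (hab : a ≠ b) (hbc : b ≠ c) (hac : a ≠ c)
    (hent : ∀ I : VXYZ n m → Bool,
      (∀ A ∈ SXor e, A.sat I) → (xorApp a b c).sat I) :
    ∃ p q r : VXYZ n m,
      ({p, q, r} : Set (VXYZ n m)) = {a, b, c} ∧ xorApp p q r ∈ SXor e :=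
  SXor.isTriple_of_forces hinj (fun k => G.not_isDiag_of_mem_edgeSet (hmem k)) hab hbc hac
    fun t u => hent _ (SXor.solution_sat t u)

/-- Maximality of the ternary-XOR encoding: if `a`, `b`, `c` are distinct
variables such that every assignment satisfying `S(G)` also satisfies
`a ⊕ b ⊕ c`, then the unordered triple `{a, b, c}` is one of the triples
whose XOR application belongs to `S(G)`. -/
theorem stmt_15 {n m : ℕ} (G : SimpleGraph (Fin n)) (e : Fin m → Sym2 (Fin n))
    (hinj : Function.Injective e) (hmem : ∀ k : Fin m, e k ∈ G.edgeSet)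
    (hsurj : ∀ s ∈ G.edgeSet, ∃ k : Fin m, e k = s)
    (a b c : VXYZ n m) (hab : a ≠ b) (hbc : b ≠ c) (hac : a ≠ c)
    (hent : ∀ I : VXYZ n m → Bool,
      (∀ A ∈ SXor e, A.sat I) → (xorApp a b c).sat I) :
    ∃ p q r : VXYZ n m,
      ({p, q, r} : Set (VXYZ n m)) = {a, b, c} ∧ xorApp p q r ∈ SXor e :=
  stmt_15_general G e hinj hmem a b c hab hbc hac hent
end

section
/- Let G be a simple graph with vertex set {1,…,n} and edge enumeration e_1,…,e_m, and let S(G) be its ternary-XOR encoding over the variables X ∪ Y ∪ Z. Then every assignment α : X → {0,1} can be extended to an assignment of X ∪ Y ∪ Z that satisfies S(G). -/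
/-! Each edge variable `y_k` is set to the negated parity of the endpoint values, which makes the
edge constraint hold; around a triangle the three parities cancel, so the three negations leave
the triangle constraint odd. The auxiliary pair is set to `z_i = 1`, `z'_i = x_i`. -/

def edgeParity {V : Type} (α : V → Bool) : Sym2 V → Bool :=
  Sym2.lift ⟨fun i j => α i ^^ α j, fun i j => Bool.xor_comm (α i) (α j)⟩

@[simp]
theorem edgeParity_mk {V : Type} (α : V → Bool) (i j : V) :
    edgeParity α s(i, j) = (α i ^^ α j) :=
  rfl

theorem xor_not_edgeParity_triangle {V : Type} (α : V → Bool) (a b c : V) :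
    (!edgeParity α s(a, b) ^^ (!edgeParity α s(b, c) ^^ !edgeParity α s(a, c))) = true := by
  simp only [edgeParity_mk]
  cases α a <;> cases α b <;> cases α c <;> rfl

def xorExtension {n m : ℕ} (e : Fin m → Sym2 (Fin n)) (α : Fin n → Bool) : VXYZ n m → Bool
  | Sum.inl i => α i
  | Sum.inr (Sum.inl k) => !edgeParity α (e k)
  | Sum.inr (Sum.inr (Sum.inl _)) => true
  | Sum.inr (Sum.inr (Sum.inr i)) => α i

section xorExtension

variable {n m : ℕ} (e : Fin m → Sym2 (Fin n)) (α : Fin n → Bool)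

theorem xorExtension_sat_edge {i j : Fin n} {k : Fin m} (hk : e k = s(i, j)) :
    (xorApp (vx i) (vx j) (vy k)).sat (xorExtension e α) := by
  show (α i ^^ (α j ^^ !edgeParity α (e k))) = true
  rw [hk, edgeParity_mk]
  cases α i <;> cases α j <;> rfl

theorem xorExtension_sat_vertex (i : Fin n) :
    (xorApp (vx i) (vz i) (vz' i)).sat (xorExtension e α) := by
  show (α i ^^ (true ^^ α i)) = true
  cases α i <;> rfl

theorem xorExtension_sat_triangle {i j k : Fin m} (h : triangleEdges (e i) (e j) (e k)) :
    (xorApp (vy i) (vy j) (vy k)).sat (xorExtension e α) := by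
  obtain ⟨a, b, c, -, -, -, hi, hj, hk⟩ := h
  show (!edgeParity α (e i) ^^ (!edgeParity α (e j) ^^ !edgeParity α (e k))) = true
  rw [hi, hj, hk]
  exact xor_not_edgeParity_triangle α a b c

theorem xorExtension_sat_SXor : ∀ A ∈ SXor e, A.sat (xorExtension e α) := by
  rintro A ((⟨i, j, k, hk, rfl⟩ | ⟨i, rfl⟩) | ⟨i, j, k, h, rfl⟩)
  · exact xorExtension_sat_edge e α hk
  · exact xorExtension_sat_vertex e α i
  · exact xorExtension_sat_triangle e α h

end xorExtension

theorem stmt_16_general {n m : ℕ} (e : Fin m → Sym2 (Fin n))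
    (α : Fin n → Bool) :
    ∃ I : VXYZ n m → Bool,
      (∀ i : Fin n, I (vx i) = α i) ∧ ∀ A ∈ SXor e, A.sat I :=
  ⟨xorExtension e α, fun _ => rfl, xorExtension_sat_SXor e α⟩

/-- Every assignment `α` to the vertex variables `X` can be extended to an
assignment of `X ∪ Y ∪ Z` satisfying the ternary-XOR encoding `S(G)`. -/
theorem stmt_16 {n m : ℕ} (G : SimpleGraph (Fin n)) (e : Fin m → Sym2 (Fin n))
    (hinj : Function.Injective e) (hmem : ∀ k : Fin m, e k ∈ G.edgeSet)
    (hsurj : ∀ s ∈ G.edgeSet, ∃ k : Fin m, e k = s)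
    (α : Fin n → Bool) :
    ∃ I : VXYZ n m → Bool,
      (∀ i : Fin n, I (vx i) = α i) ∧ ∀ A ∈ SXor e, A.sat I :=
  stmt_16_general e α
end
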